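/- For every λ with 0 < λ ≤ 1/3 and every μ ≥ 3, the inequality H(λ,μ) ≥ (1/4)·ln(min{1/λ, μ}) holds, where H(λ,μ) = μλ·ln λ − (1+μλ)·ln((1+μλ)/(1+μ)). -/

import Mathlib

/-!
On the curve `μλ = 1` we have `H(1/μ, μ) = 2 ln((1+μ)/2) - ln μ`, and this dominates `(1/4) ln μ`
for `μ ≥ 3` because `((1+μ)/2)^8 ≥ μ^5` there. Every other point is compared with this curve
by monotonicity: `∂H/∂λ = μ ln(λ(1+μ)/(1+μλ)) ≤ 0` for `λ ≤ 1`, so if `μλ ≤ 1` then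
`H(λ,μ) ≥ H(1/μ, μ)`; and with `r = (1+μλ)/(1+μ)`, `∂H/∂μ = r - λ - λ ln(r/λ) ≥ 0` by
`ln x ≤ x - 1`, so if `μλ ≥ 1` then `H(λ,μ) ≥ H(λ, 1/λ)`. In each case the point reached on the
curve is where `min{1/λ, μ}` is attained.
-/

open Real Filter

noncomputable def H (lam mu : ℝ) : ℝ :=
  mu * lam * log lam - (1 + mu * lam) * log ((1 + mu * lam) / (1 + mu))

lemma hasDerivAt_H_fst {lam mu : ℝ} (hlam : 0 < lam) (hmu : 0 ≤ mu) :
    HasDerivAt (fun l => H l mu) (mu * log (lam * (1 + mu) / (1 + mu * lam))) lam := by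
  have h1 : 0 < 1 + mu * lam := by positivity
  have h2 : 0 < 1 + mu := by linarith
  have hin : HasDerivAt (fun l => 1 + mu * l) mu lam := by
    simpa using ((hasDerivAt_id lam).const_mul mu).const_add 1
  have hq := (hin.div_const (1 + mu)).log (div_pos h1 h2).ne'
  have hx := (hasDerivAt_id' lam |>.const_mul mu).fun_mul (hasDerivAt_log hlam.ne')
  refine (hx.fun_sub (hin.fun_mul hq)).congr_deriv ?_
  rw [log_div (by positivity) h1.ne', log_mul hlam.ne' h2.ne', log_div h1.ne' h2.ne']
  field_simp
  ring

lemma hasDerivAt_H_snd {lam mu : ℝ} (hlam : 0 < lam) (hmu : 0 ≤ mu) :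
    HasDerivAt (fun m => H lam m)
      ((1 + mu * lam) / (1 + mu) - lam - lam * log ((1 + mu * lam) / (1 + mu) / lam)) mu := by
  have h1 : 0 < 1 + mu * lam := by positivity
  have h2 : 0 < 1 + mu := by linarith
  have hin : HasDerivAt (fun m => 1 + m * lam) lam mu := by
    simpa using ((hasDerivAt_id mu).mul_const lam).const_add 1
  have hin2 : HasDerivAt (fun m => 1 + m) 1 mu := by
    simpa using (hasDerivAt_id mu).const_add 1
  have hq := (hin.fun_div hin2 h2.ne').log (div_pos h1 h2).ne'
  have hx := (hasDerivAt_id' mu).mul_const (lam * log lam)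
  refine ((hx.fun_sub (hin.fun_mul hq)).congr_deriv ?_).congr_of_eventuallyEq
    (Eventually.of_forall fun m => by simp only [H]; ring)
  rw [log_div (by positivity) hlam.ne']
  field_simp
  ring

lemma antitoneOn_H_fst {mu : ℝ} (hmu : 0 ≤ mu) : AntitoneOn (fun l => H l mu) (Set.Ioc 0 1) := by
  refine antitoneOn_of_hasDerivWithinAt_nonpos (convex_Ioc 0 1)
    (fun l hl => (hasDerivAt_H_fst hl.1 hmu).continuousAt.continuousWithinAt)
    (fun l hl => (hasDerivAt_H_fst (interior_subset hl).1 hmu).hasDerivWithinAt) ?_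
  rw [interior_Ioc]
  intro l ⟨hl0, hl1⟩
  refine mul_nonpos_of_nonneg_of_nonpos hmu (log_nonpos (by positivity) ?_)
  rw [div_le_one (by positivity)]
  nlinarith

lemma monotoneOn_H_snd {lam : ℝ} (hlam : 0 < lam) : MonotoneOn (fun m => H lam m) (Set.Ici 0) := by
  refine monotoneOn_of_hasDerivWithinAt_nonneg (convex_Ici 0)
    (fun m hm => (hasDerivAt_H_snd hlam hm).continuousAt.continuousWithinAt)
    (fun m hm => (hasDerivAt_H_snd hlam (interior_subset hm)).hasDerivWithinAt) ?_
  rw [interior_Ici]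
  intro m (hm : 0 < m)
  set r := (1 + m * lam) / (1 + m)
  have hr : 0 < r := div_pos (by positivity) (by linarith)
  have hlog : lam * log (r / lam) ≤ r - lam :=
    calc lam * log (r / lam) ≤ lam * (r / lam - 1) := by
          gcongr; exact log_le_sub_one_of_pos (div_pos hr hlam)
      _ = r - lam := by field_simp
  linarith

lemma pow_five_le_half_one_add_pow_eight {m : ℝ} (hm : 3 ≤ m) : m ^ 5 ≤ ((1 + m) / 2) ^ 8 := by
  obtain ⟨t, ht, rfl⟩ : ∃ t, 0 ≤ t ∧ m = 3 + t := ⟨m - 3, by linarith, by ring⟩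
  linarith [pow_nonneg ht 2, pow_nonneg ht 3, pow_nonneg ht 4, pow_nonneg ht 5, pow_nonneg ht 6,
    pow_nonneg ht 7, pow_nonneg ht 8]

lemma quarter_log_le_H_inv_self {m : ℝ} (hm : 3 ≤ m) : 1 / 4 * log m ≤ H m⁻¹ m := by
  have hm0 : 0 < m := by linarith
  have key := log_le_log (by positivity) (pow_five_le_half_one_add_pow_eight hm)
  rw [log_pow, log_pow] at key
  have hH : H m⁻¹ m = 2 * log ((1 + m) / 2) - log m := by
    rw [H, mul_inv_cancel₀ hm0.ne', log_inv, one_add_one_eq_two, ← inv_div, log_inv]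
    ring
  rw [hH]
  norm_num at key
  linarith

theorem H_approx_five (lam : ℝ) (hlam : 0 < lam) (hlam' : lam ≤ 1 / 3)
    (mu : ℝ) (hmu : 3 ≤ mu) :
    1 / 4 * Real.log (min (1 / lam) mu) ≤ (mu * lam * Real.log lam - (1 + mu * lam) * Real.log ((1 + mu * lam) / (1 + mu))) := by
  change 1 / 4 * log (min (1 / lam) mu) ≤ H lam mu
  rcases le_total (mu * lam) 1 with hsmall | hlarge
  · have hlam_le : lam ≤ mu⁻¹ := by rw [← one_div, le_div_iff₀ (by linarith)]; linarith
    calc 1 / 4 * log (min (1 / lam) mu) = 1 / 4 * log mu := by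
          rw [min_eq_right ((le_div_iff₀ hlam).2 hsmall)]
      _ ≤ H mu⁻¹ mu := quarter_log_le_H_inv_self hmu
      _ ≤ H lam mu := antitoneOn_H_fst (by linarith) ⟨hlam, by linarith⟩
          ⟨by positivity, inv_le_one_of_one_le₀ (by linarith)⟩ hlam_le
  · have hinv_le : 1 / lam ≤ mu := by rw [div_le_iff₀ hlam]; linarith
    have h3 : 3 ≤ lam⁻¹ := by rw [← one_div, le_div_iff₀ hlam]; linarith
    calc 1 / 4 * log (min (1 / lam) mu) = 1 / 4 * log lam⁻¹ := by
          rw [min_eq_left hinv_le, one_div lam]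
      _ ≤ H lam⁻¹⁻¹ lam⁻¹ := quarter_log_le_H_inv_self h3
      _ = H lam lam⁻¹ := by rw [inv_inv]
      _ ≤ H lam mu := monotoneOn_H_snd hlam (inv_pos.2 hlam).le (by linarith : (0 : ℝ) ≤ mu)
          (by rwa [← one_div])
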